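/- arXiv:1101.4973 — 5 statements merged into one kernel-verified Lean document; each statement's English description precedes it below -/
import Mathlib

section
/- Let D be a balanced bipartite digraph with colour classes X and Y, each of cardinality a. If for every pair of vertices u, v lying in opposite colour classes with uv not an arc of D we have d^+(u) + d^-(v) ≥ a, then D contains a complete matching from X to Y (i.e., an injective function f : X → Y such that x f(x) is an arc of D for every x in X). -/
/-!
By Hall's theorem it suffices that every `s ⊆ X` has at least `|s|` out-neighbours in `Y`.
If the out-neighbourhood `N(s)` is not all of `Y`, pick `y ∈ Y \ N(s)` and `u ∈ s`: then `uy`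
is not an arc, `d⁺(u) ≤ |N(s)|`, and every in-neighbour of `y` lies in `X \ s`, so
`a ≤ d⁺(u) + d⁻(y) ≤ |N(s)| + (a - |s|)`.
-/

open Finset

/-- Out-degree of a vertex in the digraph with arc relation `A`. -/
def outDeg {V : Type*} [Fintype V] (A : V → V → Prop) [DecidableRel A] (v : V) : ℕ :=
  (Finset.univ.filter (fun w => A v w)).card

/-- In-degree of a vertex. -/
def inDeg {V : Type*} [Fintype V] (A : V → V → Prop) [DecidableRel A] (v : V) : ℕ :=
  (Finset.univ.filter (fun w => A w v)).card

/-- Number of out-neighbours of `v` lying in the set `S`. -/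
def outDegOn {V : Type*} (A : V → V → Prop) [DecidableRel A] (S : Finset V) (v : V) : ℕ :=
  (S.filter (fun w => A v w)).card

/-- Number of in-neighbours of `v` lying in the set `S`. -/
def inDegOn {V : Type*} (A : V → V → Prop) [DecidableRel A] (S : Finset V) (v : V) : ℕ :=
  (S.filter (fun w => A w v)).card

/-- `D = (V, A)` is bipartite with colour classes `X`, `Y`. -/
def IsBipartite {V : Type*} (A : V → V → Prop) (X Y : Finset V) : Prop :=
  Disjoint X Y ∧ (∀ v : V, v ∈ X ∨ v ∈ Y) ∧
    ∀ u v : V, A u v → (u ∈ X ∧ v ∈ Y) ∨ (u ∈ Y ∧ v ∈ X)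

/-- An oriented path on `s` vertices `p 0, p 1, …, p (s-1)`. -/
def IsPath {V : Type*} (A : V → V → Prop) (s : ℕ) (p : ℕ → V) : Prop :=
  Set.InjOn p (Set.Iio s) ∧ ∀ i : ℕ, i + 1 < s → A (p i) (p (i + 1))

/-- An oriented cycle on `s` distinct vertices `p 0, …, p (s-1)` (indices mod `s`). -/
def IsCycle {V : Type*} (A : V → V → Prop) (s : ℕ) (p : ℕ → V) : Prop :=
  Set.InjOn p (Set.Iio s) ∧ ∀ i : ℕ, i < s → A (p i) (p ((i + 1) % s))

/-- `M` is a matching from `X` to `Y`: an independent set of arcs with origin in `X`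
and terminus in `Y`. -/
def IsMatching {V : Type*} (A : V → V → Prop) (X Y : Finset V) (M : Finset (V × V)) : Prop :=
  (∀ e ∈ M, e.1 ∈ X ∧ e.2 ∈ Y ∧ A e.1 e.2) ∧
    ∀ e ∈ M, ∀ e' ∈ M, e ≠ e' → e.1 ≠ e'.1 ∧ e.2 ≠ e'.2

/-- A complete matching from `X` to `Y`: a matching consisting of `|X|` arcs. -/
def IsCompleteMatching {V : Type*} (A : V → V → Prop) (X Y : Finset V)
    (M : Finset (V × V)) : Prop :=
  IsMatching A X Y M ∧ M.card = X.card

/-- The path `p 0, …, p (s-1)` is compatible with the matching `M`: its arcs lie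
alternately in `M` and outside `M`. -/
def PathCompat {V : Type*} (M : Finset (V × V)) (s : ℕ) (p : ℕ → V) : Prop :=
  ∀ i : ℕ, i + 2 < s → ((p i, p (i + 1)) ∈ M ↔ (p (i + 1), p (i + 2)) ∉ M)

/-- The cycle `p 0, …, p (s-1)` is compatible with the matching `M`. -/
def CycleCompat {V : Type*} (M : Finset (V × V)) (s : ℕ) (p : ℕ → V) : Prop :=
  ∀ i : ℕ, i < s →
    ((p i, p ((i + 1) % s)) ∈ M ↔ (p ((i + 1) % s), p ((i + 2) % s)) ∉ M)

/-- The path `p 0, …, p (s-1)` avoids the vertex set `S`. -/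
def Avoids {V : Type*} (s : ℕ) (p : ℕ → V) (S : Finset V) : Prop :=
  ∀ i : ℕ, i < s → p i ∉ S

namespace IsBipartite

variable {V : Type*} {A : V → V → Prop} {X Y : Finset V}

theorem mem_right_of_adj (hD : IsBipartite A X Y) {u w : V} (hu : u ∈ X) (huw : A u w) :
    w ∈ Y :=
  (hD.2.2 u w huw).elim And.right fun h => absurd hu (disjoint_right.1 hD.1 h.1)

theorem mem_left_of_adj (hD : IsBipartite A X Y) {w v : V} (hv : v ∈ Y) (hwv : A w v) :
    w ∈ X :=
  (hD.2.2 w v hwv).elim And.left fun h => absurd hv (disjoint_left.1 hD.1 h.2)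

end IsBipartite

section Degrees

variable {V : Type*} [Fintype V] {A : V → V → Prop} [DecidableRel A]

theorem outDeg_le_card {u : V} {N : Finset V} (h : ∀ w, A u w → w ∈ N) : outDeg A u ≤ #N :=
  card_le_card fun w hw => h w (mem_filter.1 hw).2

theorem inDeg_le_card {v : V} {N : Finset V} (h : ∀ w, A w v → w ∈ N) : inDeg A v ≤ #N :=
  card_le_card fun w hw => h w (mem_filter.1 hw).2

end Degrees

theorem card_le_card_biUnion_of_le_outDeg_add_inDeg {V : Type*} [Fintype V] [DecidableEq V]
    {A : V → V → Prop} [DecidableRel A] {X Y : Finset V} {a : ℕ}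
    (hXY : ∀ u ∈ X, ∀ w, A u w → w ∈ Y) (hYX : ∀ v ∈ Y, ∀ w, A w v → w ∈ X)
    (hX : #X = a) (hY : #Y = a)
    (hdeg : ∀ u ∈ X, ∀ v ∈ Y, ¬ A u v → a ≤ outDeg A u + inDeg A v)
    {s : Finset V} (hs : s ⊆ X) :
    #s ≤ #(s.biUnion fun x => Y.filter (A x ·)) := by
  set N := s.biUnion fun x => Y.filter (A x ·)
  have mem_N {u w : V} (hu : u ∈ s) (hw : w ∈ Y) (huw : A u w) : w ∈ N :=
    mem_biUnion.2 ⟨u, hu, mem_filter.2 ⟨hw, huw⟩⟩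
  by_cases hYN : Y ⊆ N
  · calc #s ≤ #X := card_le_card hs
      _ = #Y := hX.trans hY.symm
      _ ≤ #N := card_le_card hYN
  obtain ⟨y, hyY, hyN⟩ := not_subset.1 hYN
  obtain rfl | ⟨u, hu⟩ := s.eq_empty_or_nonempty
  · simp
  have hout : outDeg A u ≤ #N :=
    outDeg_le_card fun w huw => mem_N hu (hXY u (hs hu) w huw) huw
  have hin : inDeg A y ≤ #(X \ s) :=
    inDeg_le_card fun w hwy => mem_sdiff.2
      ⟨hYX y hyY w hwy, fun hw => hyN (mem_N hw hyY hwy)⟩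
  have hsum : a ≤ outDeg A u + inDeg A y :=
    hdeg u (hs hu) y hyY fun huy => hyN (mem_N hu hyY huy)
  have hsplit : #(X \ s) + #s = #X := card_sdiff_add_card_eq_card hs
  omega

theorem stmt_0 {V : Type*} [Fintype V] [DecidableEq V]
    (A : V → V → Prop) [DecidableRel A] (X Y : Finset V) (a : ℕ)
    (hbip : IsBipartite A X Y) (hX : X.card = a) (hY : Y.card = a)
    (hdeg : ∀ u v : V, ((u ∈ X ∧ v ∈ Y) ∨ (u ∈ Y ∧ v ∈ X)) → ¬ A u v →
      a ≤ outDeg A u + inDeg A v) :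
    ∃ f : V → V, Set.InjOn f ↑X ∧ ∀ x ∈ X, f x ∈ Y ∧ A x (f x) := by
  have hall (s : Finset X) : #s ≤ #(s.biUnion fun x => Y.filter (A x ·)) := by
    simpa [image_biUnion, card_image_of_injective _ Subtype.val_injective] using
      card_le_card_biUnion_of_le_outDeg_add_inDeg (fun u hu w => hbip.mem_right_of_adj hu)
        (fun v hv w => hbip.mem_left_of_adj hv) hX hY (fun u hu v hv => hdeg u v (.inl ⟨hu, hv⟩))
        (s := s.image Subtype.val) (image_subset_iff.2 fun x _ => x.2)
  obtain ⟨f, hf_inj, hf_mem⟩ := (all_card_le_biUnion_card_iff_existsInjective' _).1 hall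
  refine ⟨fun v => if h : v ∈ X then f ⟨v, h⟩ else v, ?_, fun x hx => ?_⟩
  · intro x₁ (hx₁ : x₁ ∈ X) x₂ (hx₂ : x₂ ∈ X) h
    simp only [dif_pos hx₁, dif_pos hx₂] at h
    exact congrArg Subtype.val (hf_inj h)
  · simpa [dif_pos hx] using hf_mem ⟨x, hx⟩
end

section
/- Let D be a balanced bipartite digraph with colour classes X, Y of cardinality a ≥ 2 satisfying: d^+(u) + d^-(v) ≥ a + 1 for all u, v in opposite colour classes with uv not an arc. Let M be a complete matching from X to Y and let P = (p_1, ..., p_s) be a path compatible with M of maximal length among such paths. If p_s p_1 is an arc of D, then D contains an oriented cycle of length 2a compatible with M. -/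
open Finset

/-!
Close the maximal path `P` into a cycle `C`. Maximality forces every arc of `C` leaving `X` to be
a matching arc (otherwise a matched neighbour could be attached to `P`), so `C` is `M`-alternating.
No vertex of `Y` off `C` can send an arc to a vertex of `X` on `C`: entering `C` there through its
matched partner would give a compatible path longer than `P`. If `C` missed a vertex, it would miss
some `x ∈ X` together with its partner `y`; for any `z ∈ X` on `C` the arc `y → z` is then absent,
while every out-neighbour of `y` lies in `X` off `C` and every in-neighbour of `z` is matched into
`X` on `C`, so `d⁺(y) + d⁻(z) ≤ a`, against the degree condition. Hence `C` has length `2a`.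
-/
section Basic

variable {V : Type*} {A : V → V → Prop} {X Y : Finset V} {M : Finset (V × V)} {u v x y : V}

theorem IsBipartite.notMem_right (h : IsBipartite A X Y) (hv : v ∈ X) : v ∉ Y :=
  Finset.disjoint_left.mp h.1 hv

theorem IsBipartite.notMem_left (h : IsBipartite A X Y) (hv : v ∈ Y) : v ∉ X :=
  fun hX => h.notMem_right hX hv

theorem IsBipartite.mem_left_iff_notMem_left (h : IsBipartite A X Y) (huv : A u v) :
    u ∈ X ↔ v ∉ X := by
  rcases h.2.2 u v huv with ⟨hu, hv⟩ | ⟨hu, hv⟩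
  · exact iff_of_true hu (h.notMem_right · hv)
  · exact iff_of_false (h.notMem_right · hu) (not_not.mpr hv)

theorem IsBipartite.ne_of_adj (h : IsBipartite A X Y) (huv : A u v) : u ≠ v := by
  rintro rfl
  have := h.mem_left_iff_notMem_left huv
  tauto

theorem IsBipartite.mem_right_of_notMem_left (h : IsBipartite A X Y) (hv : v ∉ X) : v ∈ Y :=
  (h.2.1 v).resolve_left hv

theorem IsBipartite.card_eq [Fintype V] (h : IsBipartite A X Y) :
    Fintype.card V = X.card + Y.card := by
  classical
  rw [← Finset.card_union_of_disjoint h.1, ← Finset.card_univ]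
  congr
  exact (Finset.eq_univ_of_forall fun v => Finset.mem_union.mpr (h.2.1 v)).symm

theorem IsMatching.mem_left (hM : IsMatching A X Y M) (h : (x, y) ∈ M) : x ∈ X :=
  (hM.1 _ h).1

theorem IsMatching.mem_right (hM : IsMatching A X Y M) (h : (x, y) ∈ M) : y ∈ Y :=
  (hM.1 _ h).2.1

theorem IsMatching.adj (hM : IsMatching A X Y M) (h : (x, y) ∈ M) : A x y :=
  (hM.1 _ h).2.2

theorem IsMatching.snd_eq (hM : IsMatching A X Y M) {y' : V} (h : (x, y) ∈ M)
    (h' : (x, y') ∈ M) : y = y' := by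
  by_contra hne
  exact (hM.2 _ h _ h' (by simp [hne])).1 rfl

theorem IsMatching.fst_eq (hM : IsMatching A X Y M) {x' : V} (h : (x, y) ∈ M)
    (h' : (x', y) ∈ M) : x = x' := by
  by_contra hne
  exact (hM.2 _ h _ h' (by simp [hne])).2 rfl

theorem IsCompleteMatching.exists_mem_of_mem_left (hM : IsCompleteMatching A X Y M)
    (hx : x ∈ X) : ∃ y, (x, y) ∈ M := by
  obtain ⟨e, he, rfl⟩ := Finset.surjOn_of_injOn_of_card_le Prod.fst
    (fun e he => hM.1.mem_left (x := e.1) (y := e.2) he)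
    (fun e he e' he' h => by_contra fun hne => (hM.1.2 e he e' he' hne).1 h) hM.2.ge hx
  exact ⟨e.2, he⟩

theorem IsCompleteMatching.exists_mem_of_mem_right (hM : IsCompleteMatching A X Y M)
    (hYX : Y.card ≤ X.card) (hy : y ∈ Y) : ∃ x, (x, y) ∈ M := by
  obtain ⟨e, he, rfl⟩ := Finset.surjOn_of_injOn_of_card_le Prod.snd
    (fun e he => hM.1.mem_right (x := e.1) (y := e.2) he)
    (fun e he e' he' h => by_contra fun hne => (hM.1.2 e he e' he' hne).2 h)
    (hM.2 ▸ hYX) hy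
  exact ⟨e.1, he⟩

theorem IsMatching.outDeg_add_inDeg_le [Fintype V] [DecidableRel A] (hM : IsMatching A X Y M)
    (S : Set V) (hout : ∀ w, A u w → w ∈ X ∧ w ∉ S) (hin : ∀ w, A w v → ∃ x ∈ S, (x, w) ∈ M) :
    outDeg A u + inDeg A v ≤ X.card := by
  have hout_eq : outDeg A u = (X.filter (A u)).card := by
    unfold outDeg
    congr 1
    ext w
    simpa using fun huw => (hout w huw).1
  have hin_le : inDeg A v ≤ (X.filter fun w => ¬ A u w).card := by
    refine Finset.card_le_card_of_forall_subsingleton (fun w x => (x, w) ∈ M) ?_ ?_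
    · intro w hw
      obtain ⟨x, hxS, hxw⟩ := hin w (by simpa using hw)
      refine ⟨x, Finset.mem_filter.mpr ⟨hM.mem_left hxw, fun hux => (hout x hux).2 hxS⟩, hxw⟩
    · intro x _ w₁ hw₁ w₂ hw₂
      exact hM.snd_eq hw₁.2 hw₂.2
  have := Finset.card_filter_add_card_filter_not (s := X) (A u)
  omega

end Basic

def seqCons {V : Type*} (x : V) (q : ℕ → V) : ℕ → V
  | 0 => x
  | k + 1 => q k

section Cons

variable {V : Type*} {A : V → V → Prop} {M : Finset (V × V)} {s : ℕ} {q : ℕ → V} {x : V}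

theorem IsPath.seqCons (hq : IsPath A s q) (hx : ∀ i < s, q i ≠ x) (hxq : A x (q 0)) :
    IsPath A (s + 1) (seqCons x q) := by
  refine ⟨?_, ?_⟩
  · rintro (_ | i) hi (_ | j) hj h
    · rfl
    · exact absurd h.symm (hx j (by simp only [Set.mem_Iio] at hj; omega))
    · exact absurd h (hx i (by simp only [Set.mem_Iio] at hi; omega))
    · simp only [Set.mem_Iio] at hi hj
      rw [hq.1 (show i < s by omega) (show j < s by omega) h]
  · rintro (_ | i) hi
    · exact hxq
    · exact hq.2 i (by omega)

theorem PathCompat.seqCons (hq : PathCompat M s q) (hx : (x, q 0) ∈ M ↔ (q 0, q 1) ∉ M) :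
    PathCompat M (s + 1) (seqCons x q) := by
  rintro (_ | i) hi
  · exact hx
  · exact hq i (by omega)

end Cons

theorem rel_apply_mod_of_closed {α : Type*} {R : α → α → Prop} {s : ℕ} {p : ℕ → α} (hs : 0 < s)
    (hp : ∀ i, i + 1 < s → R (p i) (p (i + 1))) (hclose : R (p (s - 1)) (p 0)) (m : ℕ) :
    R (p (m % s)) (p ((m + 1) % s)) := by
  rw [← Nat.mod_add_mod]
  rcases (show m % s + 1 ≤ s from Nat.mod_lt m hs).lt_or_eq with h | h
  · rw [Nat.mod_eq_of_lt h]
    exact hp _ h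
  · rw [h, Nat.mod_self, show m % s = s - 1 by omega]
    exact hclose

/-- An `M`-alternating cycle of length `s`, written as an `s`-periodic sequence. In a bipartite
digraph whose matching arcs all leave `X`, alternation means that the arcs leaving `X` are exactly
the matching arcs. -/
structure IsAlternatingCycle {V : Type*} (A : V → V → Prop) (X : Finset V) (M : Finset (V × V))
    (s : ℕ) (c : ℕ → V) : Prop where
  pos : 0 < s
  periodic : Function.Periodic c s
  injOn : Set.InjOn c (Set.Iio s)
  adj : ∀ m, A (c m) (c (m + 1))
  mem_iff : ∀ m, (c m, c (m + 1)) ∈ M ↔ c m ∈ X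

namespace IsAlternatingCycle

variable {V : Type*} {A : V → V → Prop} {X Y : Finset V} {M : Finset (V × V)} {s : ℕ}
  {c : ℕ → V}

theorem isCycle (hc : IsAlternatingCycle A X M s c) : IsCycle A s c :=
  ⟨hc.injOn, fun m _ => hc.periodic.map_mod_nat (m + 1) ▸ hc.adj m⟩

theorem mem_iff_notMem (hc : IsAlternatingCycle A X M s c) (hbip : IsBipartite A X Y) (m : ℕ) :
    (c m, c (m + 1)) ∈ M ↔ (c (m + 1), c (m + 2)) ∉ M := by
  rw [hc.mem_iff, hc.mem_iff, hbip.mem_left_iff_notMem_left (hc.adj m)]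

theorem cycleCompat (hc : IsAlternatingCycle A X M s c) (hbip : IsBipartite A X Y) :
    CycleCompat M s c := fun m _ => by
  simpa only [hc.periodic.map_mod_nat] using hc.mem_iff_notMem hbip m

theorem injOn_add (hc : IsAlternatingCycle A X M s c) (j : ℕ) :
    Set.InjOn (fun k => c (j + k)) (Set.Iio s) := by
  intro k₁ hk₁ k₂ hk₂ h
  simp only [Set.mem_Iio] at hk₁ hk₂
  dsimp only at h
  rw [← hc.periodic.map_mod_nat, ← hc.periodic.map_mod_nat (j + k₂)] at h
  have hmod : j + k₁ ≡ j + k₂ [MOD s] :=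
    hc.injOn (Nat.mod_lt _ hc.pos) (Nat.mod_lt _ hc.pos) h
  simpa [Nat.ModEq, Nat.mod_eq_of_lt hk₁, Nat.mod_eq_of_lt hk₂] using
    Nat.ModEq.add_left_cancel' j hmod

theorem fst_mem_range_iff (hc : IsAlternatingCycle A X M s c) (hbip : IsBipartite A X Y)
    (hM : IsMatching A X Y M) {x y : V} (hxy : (x, y) ∈ M) :
    x ∈ Set.range c ↔ y ∈ Set.range c := by
  constructor
  · rintro ⟨m, rfl⟩
    exact ⟨m + 1, hM.snd_eq ((hc.mem_iff m).mpr (hM.mem_left hxy)) hxy⟩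
  · rintro ⟨m, rfl⟩
    have hm : c (m + s - 1 + 1) = c m := by
      rw [Nat.sub_add_cancel (by have := hc.pos; omega), hc.periodic]
    have hprev : c (m + s - 1) ∈ X := by
      rw [hbip.mem_left_iff_notMem_left (hc.adj _), hm]
      exact hbip.notMem_left (hM.mem_right hxy)
    have := (hc.mem_iff _).mpr hprev
    rw [hm] at this
    exact ⟨m + s - 1, hM.fst_eq this hxy⟩

/-- Otherwise `x, v, c j, c (j + 1), …, c (j + s - 1)`, with `(x, v) ∈ M`, would be a longer
compatible path. -/
theorem not_adj_of_forall_le (hc : IsAlternatingCycle A X M s c) (hbip : IsBipartite A X Y)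
    (hM : IsCompleteMatching A X Y M) (hYX : Y.card ≤ X.card)
    (hmax : ∀ t q, IsPath A t q → PathCompat M t q → t ≤ s) ⦃v w : V⦄ (hv : v ∈ Y)
    (hvc : v ∉ Set.range c) (hwc : w ∈ Set.range c) (hwX : w ∈ X) : ¬ A v w := by
  intro hvw
  obtain ⟨j, rfl⟩ := hwc
  obtain ⟨x, hxv⟩ := hM.exists_mem_of_mem_right hYX hv
  have hxc : x ∉ Set.range c := (hc.fst_mem_range_iff hbip hM.1 hxv).not.mpr hvc
  have hvM : (v, c j) ∉ M := fun h => hbip.notMem_left hv (hM.1.mem_left h)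
  have hr : IsPath A s (fun k => c (j + k)) := ⟨hc.injOn_add j, fun i _ => hc.adj (j + i)⟩
  have hrM : PathCompat M s (fun k => c (j + k)) := fun i _ => hc.mem_iff_notMem hbip (j + i)
  have hvr := hr.seqCons (fun i _ hi => hvc ⟨_, hi⟩) hvw
  have hvrM := hrM.seqCons (iff_of_false hvM (not_not.mpr ((hc.mem_iff j).mpr hwX)))
  have hxvr := hvr.seqCons (x := x)
    (by
      rintro (_ | i) _ h
      · exact hbip.notMem_left hv (by simpa [show v = x from h] using hM.1.mem_left hxv)
      · exact hxc ⟨_, h⟩)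
    (hM.1.adj hxv)
  have hxvrM := hvrM.seqCons (x := x) (iff_of_true hxv hvM)
  have := hmax _ _ hxvr hxvrM
  omega

theorem surjective [Fintype V] [DecidableRel A] (hc : IsAlternatingCycle A X M s c)
    (hbip : IsBipartite A X Y) (hM : IsCompleteMatching A X Y M) (hYX : Y.card ≤ X.card)
    (hdeg : ∀ u v, u ∈ Y → v ∈ X → ¬ A u v → X.card + 1 ≤ outDeg A u + inDeg A v)
    (hmax : ∀ t q, IsPath A t q → PathCompat M t q → t ≤ s) : Function.Surjective c := by
  have hnoarc := hc.not_adj_of_forall_le hbip hM hYX hmax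
  by_contra hns
  obtain ⟨x, hxX, hxc⟩ : ∃ x ∈ X, x ∉ Set.range c := by
    obtain ⟨v, hvc⟩ := not_forall.mp hns
    by_cases hvX : v ∈ X
    · exact ⟨v, hvX, hvc⟩
    · obtain ⟨x, hxv⟩ := hM.exists_mem_of_mem_right hYX (hbip.mem_right_of_notMem_left hvX)
      exact ⟨x, hM.1.mem_left hxv, (hc.fst_mem_range_iff hbip hM.1 hxv).not.mpr hvc⟩
  obtain ⟨y, hxy⟩ := hM.exists_mem_of_mem_left hxX
  have hy := hM.1.mem_right hxy
  have hyc : y ∉ Set.range c := (hc.fst_mem_range_iff hbip hM.1 hxy).not.mp hxc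
  obtain ⟨z, hzc, hzX⟩ : ∃ z ∈ Set.range c, z ∈ X := by
    by_cases h0 : c 0 ∈ X
    · exact ⟨c 0, ⟨0, rfl⟩, h0⟩
    · exact ⟨c 1, ⟨1, rfl⟩, (hbip.mem_left_iff_notMem_left (hc.adj 0)).not_left.mp h0⟩
  have hle := hM.1.outDeg_add_inDeg_le (u := y) (v := z) (Set.range c)
    (fun w hyw =>
      have hwX := (hbip.mem_left_iff_notMem_left hyw).not_left.mp (hbip.notMem_left hy)
      ⟨hwX, fun hwc => hnoarc hy hyc hwc hwX hyw⟩)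
    (fun w hwz => by
      have hw := hbip.mem_right_of_notMem_left
        ((hbip.mem_left_iff_notMem_left hwz).not.mpr (not_not.mpr hzX))
      have hwc : w ∈ Set.range c := by_contra fun hwc => hnoarc hw hwc hzc hzX hwz
      obtain ⟨x', hx'⟩ := hM.exists_mem_of_mem_right hYX hw
      exact ⟨x', (hc.fst_mem_range_iff hbip hM.1 hx').mpr hwc, hx'⟩)
  have := hdeg y z hy hzX (hnoarc hy hyc hzc hzX)
  omega

theorem card_eq [Fintype V] (hc : IsAlternatingCycle A X M s c) (hsurj : Function.Surjective c) :
    Fintype.card V = s := by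
  classical
  have himage : (Finset.range s).image c = Finset.univ := by
    refine Finset.eq_univ_of_forall fun v => ?_
    obtain ⟨m, rfl⟩ := hsurj v
    exact Finset.mem_image.mpr ⟨m % s, Finset.mem_range.mpr (Nat.mod_lt _ hc.pos),
      hc.periodic.map_mod_nat m⟩
  rw [← Finset.card_univ, ← himage, Finset.card_image_of_injOn (by simpa using hc.injOn),
    Finset.card_range]

end IsAlternatingCycle

section MaximalPath

variable {V : Type*} {A : V → V → Prop} {X Y : Finset V} {M : Finset (V × V)} {s : ℕ}
  {p : ℕ → V}

theorem IsBipartite.two_le_of_closed (hbip : IsBipartite A X Y) (hclose : A (p (s - 1)) (p 0)) :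
    2 ≤ s := by
  by_contra h
  exact hbip.ne_of_adj hclose (by rw [show s - 1 = 0 by omega])

variable (hbip : IsBipartite A X Y) (hM : IsCompleteMatching A X Y M) (hp : IsPath A s p)
  (hpM : PathCompat M s p) (hmax : ∀ t q, IsPath A t q → PathCompat M t q → t ≤ s)
  (hclose : A (p (s - 1)) (p 0))
include hbip hM hp hpM hmax hclose

theorem mem_of_mem_left_of_maximal {i : ℕ} (hi : i + 1 < s) (hpi : p i ∈ X) :
    (p i, p (i + 1)) ∈ M := by
  have hnext : p (i + 1) ∉ X := (hbip.mem_left_iff_notMem_left (hp.2 i hi)).mp hpi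
  by_cases h2 : i + 2 < s
  · exact (hpM i h2).mpr fun h => hnext (hM.1.mem_left h)
  by_cases h1 : 1 ≤ i
  · obtain ⟨k, rfl⟩ : ∃ k, i = k + 1 := ⟨i - 1, by omega⟩
    have hprev : p k ∉ X := (hbip.mem_left_iff_notMem_left (hp.2 k (by omega))).not_left.mpr hpi
    by_contra h
    exact hprev (hM.1.mem_left ((hpM k (by omega)).mpr h))
  -- `s = 2`: otherwise `p 1, p 0, y` with `(p 0, y) ∈ M` is a longer compatible path
  obtain rfl : i = 0 := by omega
  obtain rfl : s = 2 := by omega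
  by_contra h01
  obtain ⟨y, hy⟩ := hM.exists_mem_of_mem_left hpi
  have hyY := hM.1.mem_right hy
  have hyM : (y, y) ∉ M := fun h => hbip.notMem_left hyY (hM.1.mem_left h)
  have hy₁ : IsPath A 1 (fun _ => y) :=
    ⟨fun a ha b hb _ => by simp only [Set.mem_Iio] at ha hb; omega, fun i hi => by omega⟩
  have hy₁M : PathCompat M 1 (fun _ => y) := fun i hi => by omega
  have hpath := (hy₁.seqCons (x := p 0) (fun _ _ h => hbip.notMem_left hyY (h ▸ hpi))
    (hM.1.adj hy)).seqCons (x := p 1)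
    (by
      rintro (_ | _) _ h
      · exact hnext (h ▸ hpi)
      · exact h01 (h ▸ hy))
    hclose
  have hpathM := (hy₁M.seqCons (x := p 0) (iff_of_true hy hyM)).seqCons (x := p 1)
    (iff_of_false (fun h => hnext (hM.1.mem_left h)) (not_not.mpr hy))
  have := hmax _ _ hpath hpathM
  omega

theorem closing_mem_of_maximal (hYX : Y.card ≤ X.card) (hlast : p (s - 1) ∈ X) :
    (p (s - 1), p 0) ∈ M := by
  have hs := hbip.two_le_of_closed hclose
  have h0 : p 0 ∉ X := (hbip.mem_left_iff_notMem_left hclose).mp hlast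
  obtain ⟨x, hx⟩ := hM.exists_mem_of_mem_right hYX (hbip.mem_right_of_notMem_left h0)
  obtain ⟨j, hj, rfl⟩ : ∃ j < s, p j = x := by
    by_contra! hx'
    have := hmax _ _ (hp.seqCons hx' (hM.1.adj hx))
      (hpM.seqCons (iff_of_true hx fun h => h0 (hM.1.mem_left h)))
    omega
  obtain rfl : j = s - 1 := by
    by_contra hj'
    have h := hM.1.snd_eq
      (mem_of_mem_left_of_maximal hbip hM hp hpM hmax hclose (by omega) (hM.1.mem_left hx)) hx
    have := hp.1 (by simp only [Set.mem_Iio]; omega) (by simp only [Set.mem_Iio]; omega) h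
    omega
  exact hx

theorem isAlternatingCycle_of_maximal (hYX : Y.card ≤ X.card) :
    IsAlternatingCycle A X M s (fun m => p (m % s)) := by
  have hs : 0 < s := by have := hbip.two_le_of_closed hclose; omega
  refine ⟨hs, fun m => by simp, fun m hm n hn h => ?_, rel_apply_mod_of_closed hs hp.2 hclose,
    rel_apply_mod_of_closed (R := fun u v => (u, v) ∈ M ↔ u ∈ X) hs
      (fun i hi => ⟨hM.1.mem_left, mem_of_mem_left_of_maximal hbip hM hp hpM hmax hclose hi⟩)
      ⟨hM.1.mem_left, closing_mem_of_maximal hbip hM hp hpM hmax hclose hYX⟩⟩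
  simp only [Set.mem_Iio] at hm hn
  simp only [Nat.mod_eq_of_lt hm, Nat.mod_eq_of_lt hn] at h
  exact hp.1 hm hn h

end MaximalPath

theorem stmt_2_general {V : Type*} [Fintype V]
    (A : V → V → Prop) [DecidableRel A] (X Y : Finset V) (a : ℕ)
    (hbip : IsBipartite A X Y) (hX : X.card = a) (hY : Y.card = a)
    (hdeg : ∀ u v : V, ((u ∈ X ∧ v ∈ Y) ∨ (u ∈ Y ∧ v ∈ X)) → ¬ A u v →
      a + 1 ≤ outDeg A u + inDeg A v)
    (M : Finset (V × V)) (hM : IsCompleteMatching A X Y M)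
    (s : ℕ) (p : ℕ → V)
    (hp : IsPath A s p ∧ PathCompat M s p)
    (hmax : ∀ (t : ℕ) (q : ℕ → V), IsPath A t q → PathCompat M t q → t ≤ s)
    (hclose : A (p (s - 1)) (p 0)) :
    ∃ q : ℕ → V, IsCycle A (2 * a) q ∧ CycleCompat M (2 * a) q := by
  have hYX : Y.card ≤ X.card := by omega
  have hc := isAlternatingCycle_of_maximal hbip hM hp.1 hp.2 hmax hclose hYX
  have hsurj := hc.surjective hbip hM hYX (fun u v hu hv => hX ▸ hdeg u v (Or.inr ⟨hu, hv⟩)) hmax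
  obtain rfl : s = 2 * a := by
    have := hbip.card_eq
    rw [hc.card_eq hsurj] at this
    omega
  exact ⟨_, hc.isCycle, hc.cycleCompat hbip⟩

theorem stmt_2 {V : Type*} [Fintype V] [DecidableEq V]
    (A : V → V → Prop) [DecidableRel A] (X Y : Finset V) (a : ℕ)
    (ha : 2 ≤ a) (hbip : IsBipartite A X Y) (hX : X.card = a) (hY : Y.card = a)
    (hdeg : ∀ u v : V, ((u ∈ X ∧ v ∈ Y) ∨ (u ∈ Y ∧ v ∈ X)) → ¬ A u v →
      a + 1 ≤ outDeg A u + inDeg A v)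
    (M : Finset (V × V)) (hM : IsCompleteMatching A X Y M)
    (s : ℕ) (p : ℕ → V) (hs : 1 ≤ s)
    (hp : IsPath A s p ∧ PathCompat M s p)
    (hmax : ∀ (t : ℕ) (q : ℕ → V), IsPath A t q → PathCompat M t q → t ≤ s)
    (hclose : A (p (s - 1)) (p 0)) :
    ∃ q : ℕ → V, IsCycle A (2 * a) q ∧ CycleCompat M (2 * a) q :=
  stmt_2_general A X Y a hbip hX hY hdeg M hM s p hp hmax hclose
end

section
/- Let D be a balanced bipartite digraph containing a complete matching M from X to Y, and let P = (p_1, ..., p_s) be a path compatible with M of maximal length among paths compatible with M. Then, after possibly cyclically renumbering in the case P closes into a cycle, p_1 ∈ X and p_s ∈ Y; in particular, s is even. -/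
open Finset

theorem stmt_5 {V : Type*} [Fintype V] [DecidableEq V]
    (A : V → V → Prop) [DecidableRel A] (X Y : Finset V)
    (hbip : IsBipartite A X Y) (hbal : X.card = Y.card)
    (M : Finset (V × V)) (hM : IsCompleteMatching A X Y M)
    (s : ℕ) (p : ℕ → V) (hs : 1 ≤ s)
    (hp : IsPath A s p ∧ PathCompat M s p)
    (hmax : ∀ (t : ℕ) (q : ℕ → V), IsPath A t q → PathCompat M t q → t ≤ s) :
    ∃ q : ℕ → V, (IsPath A s q ∧ PathCompat M s q) ∧
      (∀ v : V, (∃ i < s, q i = v) ↔ (∃ i < s, p i = v)) ∧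
      q 0 ∈ X ∧ q (s - 1) ∈ Y ∧ Even s := by

  classical
  obtain ⟨⟨hinj, harcs⟩, hcompat⟩ := hp
  obtain ⟨⟨hM1, hM2⟩, hMcard⟩ := hM
  obtain ⟨hdisj, hcover, harc⟩ := hbip
  have hdXY : ∀ {v : V}, v ∈ X → v ∉ Y := fun h => Finset.disjoint_left.mp hdisj h
  have huniq1 : ∀ e ∈ M, ∀ e' ∈ M, e.1 = e'.1 → e = e' := by
    intro e he e' he' h; by_contra hne; exact (hM2 e he e' he' hne).1 h
  have huniq2 : ∀ e ∈ M, ∀ e' ∈ M, e.2 = e'.2 → e = e' := by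
    intro e he e' he' h; by_contra hne; exact (hM2 e he e' he' hne).2 h
  have himg1 : M.image Prod.fst = X := by
    apply Finset.eq_of_subset_of_card_le
    · intro x hx
      obtain ⟨e, he, rfl⟩ := Finset.mem_image.mp hx
      exact (hM1 e he).1
    · rw [Finset.card_image_of_injOn (fun e he e' he' h => huniq1 e he e' he' h), hMcard]
  have himg2 : M.image Prod.snd = Y := by
    apply Finset.eq_of_subset_of_card_le
    · intro y hy
      obtain ⟨e, he, rfl⟩ := Finset.mem_image.mp hy
      exact (hM1 e he).2.1
    · rw [Finset.card_image_of_injOn (fun e he e' he' h => huniq2 e he e' he' h), hMcard, hbal]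
  have hsurj1 : ∀ x ∈ X, ∃ e ∈ M, e.1 = x := by
    intro x hx; rw [← himg1] at hx; exact Finset.mem_image.mp hx
  have hsurj2 : ∀ y ∈ Y, ∃ e ∈ M, e.2 = y := by
    intro y hy; rw [← himg2] at hy; exact Finset.mem_image.mp hy
  -- s ≥ 2
  have hXne : X.Nonempty := by
    rcases hcover (p 0) with h | h
    · exact ⟨_, h⟩
    · have h1 : 0 < Y.card := Finset.card_pos.mpr ⟨_, h⟩
      rw [← hbal] at h1
      exact Finset.card_pos.mp h1
  obtain ⟨e, heM⟩ : M.Nonempty := by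
    rw [← Finset.card_pos, hMcard]; exact Finset.card_pos.mpr hXne
  have he1 := hM1 e heM
  have hs2 : 2 ≤ s := by
    refine hmax 2 (fun i => if i = 0 then e.1 else e.2) ⟨?_, ?_⟩ ?_
    · intro i hi j hj hij
      simp only [Set.mem_Iio] at hi hj
      have hne : e.1 ≠ e.2 := fun h => hdXY he1.1 (h ▸ he1.2.1)
      dsimp only at hij
      by_cases hi0 : i = 0 <;> by_cases hj0 : j = 0
      · omega
      · rw [if_pos hi0, if_neg hj0] at hij; exact absurd hij hne
      · rw [if_neg hi0, if_pos hj0] at hij; exact absurd hij.symm hne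
      · omega
    · intro i hi
      have hi0 : i = 0 := by omega
      subst hi0; simpa using he1.2.2
    · intro i hi; omega
  -- alternation lemma
  have halt : ∀ (qq : ℕ → V), qq 0 ∈ X → (∀ i, i + 1 < s → A (qq i) (qq (i + 1))) →
      ∀ i, i < s → (qq i ∈ X ↔ Even i) := by
    intro qq h0 hq i
    induction i with
    | zero => intro _; simp [h0]
    | succ n ih =>
      intro hn
      have hn' : n < s := by omega
      rcases harc _ _ (hq n hn) with ⟨hx, hy⟩ | ⟨hy, hx⟩
      · have he : Even n := (ih hn').mp hx
        simp only [Nat.even_add_one, he, not_true, iff_false]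
        exact fun h => hdXY h hy
      · have hne : ¬ Even n := fun h => hdXY ((ih hn').mpr h) hy
        simp only [Nat.even_add_one, hne, not_false_iff, iff_true]
        exact hx
  -- Lemma A: if the last vertex is in X then the matching arc closes the cycle
  have lemA : p (s - 1) ∈ X → (p (s - 1), p 0) ∈ M := by
    intro hend
    obtain ⟨m, hmM, hm1⟩ := hsurj1 (p (s - 1)) hend
    have hmM' : (p (s - 1), m.2) ∈ M := by
      have : m = (p (s - 1), m.2) := by rw [← hm1]
      rwa [← this]
    have hm2Y : m.2 ∈ Y := (hM1 m hmM).2.1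
    by_cases hon : ∃ j, j < s ∧ p j = m.2
    · obtain ⟨j, hj, hpj⟩ := hon
      have hjne : j ≠ s - 1 := by
        intro h; subst h; exact hdXY hend (hpj ▸ hm2Y)
      have hj0 : j = 0 := by
        by_contra hj0
        have hj1 : j + 1 < s := by omega
        have hnm : (p (j - 1), p j) ∉ M := by
          intro hmem
          have heq := huniq2 _ hmem _ hmM' (by simp [hpj])
          have h1 : p (j - 1) = p (s - 1) := congrArg Prod.fst heq
          have := hinj (show (j - 1 : ℕ) ∈ Set.Iio s by simp; omega)
            (show s - 1 ∈ Set.Iio s by simp; omega) h1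
          omega
        have hc := hcompat (j - 1) (by omega)
        rw [show j - 1 + 1 = j by omega, show j - 1 + 2 = j + 1 by omega] at hc
        have hMj : (p j, p (j + 1)) ∈ M := by
          by_contra h; exact hnm (hc.mpr h)
        exact hdXY ((hM1 _ hMj).1) (hpj ▸ hm2Y)
      subst hj0
      rwa [hpj]
    · exfalso
      push_neg at hon
      have hle := hmax (s + 1) (fun i => if i < s then p i else m.2) ⟨?_, ?_⟩ ?_
      · omega
      · intro i hi j hj h
        simp only [Set.mem_Iio] at hi hj
        by_cases hi' : i < s <;> by_cases hj' : j < s <;> simp only [hi', hj', if_pos, if_neg, if_true, if_false] at h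
        · exact hinj (by simpa using hi') (by simpa using hj') h
        · exact absurd h (hon i hi')
        · exact absurd h.symm (hon j hj')
        · omega
      · intro i hi
        have his : i < s := by omega
        simp only [his, if_true]
        by_cases h1 : i + 1 < s
        · simp only [h1, if_true]; exact harcs i h1
        · have : i = s - 1 := by omega
          subst this
          simp only [h1, if_false]
          have := (hM1 m hmM).2.2
          rwa [hm1] at this
      · intro i hi
        have his : i < s := by omega
        have h1s : i + 1 < s := by omega
        simp only [his, h1s, if_true]
        by_cases h2 : i + 2 < s
        · simp only [h2, if_true]; exact hcompat i h2
        · have hieq : i + 2 = s := by omega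
          simp only [h2, if_false]
          have hL : (p i, p (i + 1)) ∉ M := by
            intro hmem
            have : p (i + 1) ∈ Y := (hM1 _ hmem).2.1
            have h1 : i + 1 = s - 1 := by omega
            rw [h1] at this
            exact hdXY hend this
          have hR : (p (i + 1), m.2) ∈ M := by
            have h1 : i + 1 = s - 1 := by omega
            rw [h1]; exact hmM'
          simp [hL, hR]
  -- Lemma B: if the first vertex is in Y then the matching arc closes the cycle
  have lemB : p 0 ∈ Y → (p (s - 1), p 0) ∈ M := by
    intro hstart
    obtain ⟨u, huM, hu2⟩ := hsurj2 (p 0) hstart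
    have huM' : (u.1, p 0) ∈ M := by
      have : u = (u.1, p 0) := by rw [← hu2]
      rwa [← this]
    have hu1X : u.1 ∈ X := (hM1 u huM).1
    have hp01 : (p 0, p 1) ∉ M := fun h => hdXY ((hM1 _ h).1) hstart
    by_cases hon : ∃ j, j < s ∧ p j = u.1
    · obtain ⟨j, hj, hpj⟩ := hon
      have hjne : j ≠ 0 := by
        intro h; subst h; exact hdXY (hpj ▸ hu1X) hstart
      have hj0 : j = s - 1 := by
        by_contra hjs
        have hj1 : j + 1 < s := by omega
        have hnm : (p j, p (j + 1)) ∉ M := by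
          intro hmem
          have heq := huniq1 _ hmem _ huM' (by simp [hpj])
          have h1 : p (j + 1) = p 0 := congrArg Prod.snd heq
          have := hinj (show (j + 1 : ℕ) ∈ Set.Iio s by simpa using hj1)
            (show (0 : ℕ) ∈ Set.Iio s by simp; omega) h1
          omega
        have hc := hcompat (j - 1) (by omega)
        rw [show j - 1 + 1 = j by omega, show j - 1 + 2 = j + 1 by omega] at hc
        have hMj : (p (j - 1), p j) ∈ M := hc.mpr hnm
        exact hdXY (hpj ▸ hu1X) ((hM1 _ hMj).2.1)
      subst hj0
      rwa [hpj]
    · exfalso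
      push_neg at hon
      have hle := hmax (s + 1) (fun i => if i = 0 then u.1 else p (i - 1)) ⟨?_, ?_⟩ ?_
      · omega
      · intro i hi j hj h
        simp only [Set.mem_Iio] at hi hj
        by_cases hi' : i = 0 <;> by_cases hj' : j = 0 <;>
          simp only [hi', hj', if_pos, if_neg, if_true, if_false] at h
        · omega
        · exact absurd h.symm (hon (j - 1) (by omega))
        · exact absurd h (hon (i - 1) (by omega))
        · have := hinj (show (i - 1 : ℕ) ∈ Set.Iio s by simp; omega)
            (show (j - 1 : ℕ) ∈ Set.Iio s by simp; omega) h
          omega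
      · intro i hi
        by_cases hi' : i = 0
        · subst hi'
          simp only [if_true]
          have := (hM1 u huM).2.2
          rw [hu2] at this
          simpa using this
        · simp only [hi', if_false, Nat.add_eq_zero, one_ne_zero, and_false]
          have : i - 1 + 1 = i := by omega
          have harc' := harcs (i - 1) (by omega)
          rw [this] at harc'
          have h2 : i + 1 - 1 = i := by omega
          rw [h2]
          exact harc'
      · intro i hi
        by_cases hi' : i = 0
        · subst hi'
          simp only [if_true, Nat.add_eq_zero, one_ne_zero, and_false, if_false]
          norm_num
          constructor
          · intro _; simpa using hp01
          · intro _; exact huM'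
        · simp only [hi', if_false, Nat.add_eq_zero, one_ne_zero, and_false, if_false]
          have hc := hcompat (i - 1) (by omega)
          rw [show i - 1 + 1 = i by omega, show i - 1 + 2 = i + 1 by omega] at hc
          have h1 : i + 1 - 1 = i := by omega
          have h2 : i + 2 - 1 = i + 1 := by omega
          rw [h1, h2]
          exact hc
  -- main case split
  rcases hcover (p (s - 1)) with hend | hend
  · -- last vertex in X : cycle closes, shift by one
    have hcyc := lemA hend
    have hp0Y : p 0 ∈ Y := (hM1 _ hcyc).2.1
    have hp1X : p 1 ∈ X := by
      rcases harc _ _ (harcs 0 (by omega)) with ⟨h, _⟩ | ⟨_, h⟩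
      · exact absurd h (fun h => hdXY h hp0Y)
      · exact h
    have hmodlt : ∀ k, k < s → (k + 1) % s < s := fun k hk => Nat.mod_lt _ (by omega)
    have hmodeq : ∀ k, k + 1 < s → (k + 1) % s = k + 1 := fun k hk => Nat.mod_eq_of_lt hk
    refine ⟨fun i => p ((i + 1) % s), ⟨⟨?_, ?_⟩, ?_⟩, ?_, ?_, ?_, ?_⟩
    · -- injectivity
      intro i hi j hj h
      simp only [Set.mem_Iio] at hi hj
      have := hinj (show (i + 1) % s ∈ Set.Iio s by simpa using hmodlt i hi)
        (show (j + 1) % s ∈ Set.Iio s by simpa using hmodlt j hj) h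
      by_cases hi' : i + 1 < s <;> by_cases hj' : j + 1 < s
      · rw [hmodeq i hi', hmodeq j hj'] at this; omega
      · have hj'' : j + 1 = s := by omega
        rw [hmodeq i hi', hj'', Nat.mod_self] at this; omega
      · have hi'' : i + 1 = s := by omega
        rw [hi'', Nat.mod_self, hmodeq j hj'] at this; omega
      · omega
    · -- arcs
      intro i hi
      dsimp only
      rw [hmodeq i hi]
      by_cases h2 : i + 2 < s
      · rw [show i + 1 + 1 = i + 2 from rfl, hmodeq (i + 1) h2]
        exact harcs (i + 1) h2
      · have heq : i + 1 + 1 = s := by omega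
        rw [show i + 1 + 1 = i + 2 from rfl, show i + 2 = s by omega, Nat.mod_self]
        have := (hM1 _ hcyc).2.2
        rwa [show s - 1 = i + 1 by omega] at this
    · -- compatibility
      intro i hi
      dsimp only
      rw [hmodeq i (by omega), show i + 1 + 1 = i + 2 from rfl, hmodeq (i + 1) hi]
      by_cases h3 : i + 3 < s
      · rw [show i + 2 + 1 = i + 3 from rfl, hmodeq (i + 2) h3]
        exact hcompat (i + 1) h3
      · rw [show i + 2 + 1 = i + 3 from rfl, show i + 3 = s by omega, Nat.mod_self]
        have hL : (p (i + 1), p (i + 2)) ∉ M := by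
          intro hmem
          have : p (i + 2) ∈ Y := (hM1 _ hmem).2.1
          rw [show i + 2 = s - 1 by omega] at this
          exact hdXY hend this
        have hR : (p (i + 2), p 0) ∈ M := by
          rw [show i + 2 = s - 1 by omega]; exact hcyc
        simp [hL, hR]
    · -- same vertex set
      intro v
      constructor
      · rintro ⟨i, hi, rfl⟩
        exact ⟨(i + 1) % s, hmodlt i hi, rfl⟩
      · rintro ⟨j, hj, rfl⟩
        refine ⟨(j + (s - 1)) % s, Nat.mod_lt _ (by omega), ?_⟩
        dsimp only
        congr 1
        have h1 : ((j + (s - 1)) % s + 1) % s = (j + (s - 1) + 1) % s := Nat.mod_add_mod _ _ _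
        rw [h1, show j + (s - 1) + 1 = j + s by omega, Nat.add_mod_right, Nat.mod_eq_of_lt hj]
    · -- q 0 ∈ X
      simpa [Nat.mod_eq_of_lt (show 1 < s by omega)] using hp1X
    · -- q (s-1) ∈ Y
      dsimp only
      rw [show s - 1 + 1 = s by omega, Nat.mod_self]
      exact hp0Y
    · -- Even s
      have hq0 : p ((0 + 1) % s) ∈ X := by
        simpa [Nat.mod_eq_of_lt (show 1 < s by omega)] using hp1X
      have hqarcs : ∀ i, i + 1 < s → A (p ((i + 1) % s)) (p ((i + 1 + 1) % s)) := by
        intro i hi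
        rw [hmodeq i hi]
        by_cases h2 : i + 2 < s
        · rw [show i + 1 + 1 = i + 2 from rfl, hmodeq (i + 1) h2]
          exact harcs (i + 1) h2
        · rw [show i + 1 + 1 = i + 2 from rfl, show i + 2 = s by omega, Nat.mod_self]
          have := (hM1 _ hcyc).2.2
          rwa [show s - 1 = i + 1 by omega] at this
      have hlast := (halt (fun i => p ((i + 1) % s)) hq0 hqarcs (s - 1) (by omega))
      have hnX : p ((s - 1 + 1) % s) ∉ X := by
        rw [show s - 1 + 1 = s by omega, Nat.mod_self]
        exact fun h => hdXY h hp0Y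
      have hodd : ¬ Even (s - 1) := fun h => hnX (hlast.mpr h)
      have : Even (s - 1 + 1) := Nat.even_add_one.mpr hodd
      rwa [show s - 1 + 1 = s by omega] at this
  · -- last vertex in Y : check the first one
    rcases hcover (p 0) with hst | hst
    · -- everything fine, q = p
      refine ⟨p, ⟨⟨hinj, harcs⟩, hcompat⟩, fun v => Iff.rfl, hst, hend, ?_⟩
      have hlast := halt p hst harcs (s - 1) (by omega)
      have hodd : ¬ Even (s - 1) := fun h => hdXY (hlast.mpr h) hend
      have : Even (s - 1 + 1) := Nat.even_add_one.mpr hodd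
      rwa [show s - 1 + 1 = s by omega] at this
    · -- p 0 ∈ Y, but then lemB forces p (s-1) ∈ X, contradicting p (s-1) ∈ Y
      have hcyc := lemB hst
      exact absurd ((hM1 _ hcyc).1) (fun h => hdXY h hend)
end

section
/- For every natural number k and every pair of integers a, b with b ≥ a + 2k + 2 and a ≥ 2, there exists a bipartite digraph D with colour classes X, Y of cardinalities a and b such that d^+(u) + d^-(v) ≥ a + k + 1 for every pair of non-neighbouring vertices u, v from opposite colour classes, yet D contains no oriented cycle of length 2a. (Take D to be the disjoint union of the complete bipartite digraphs K*_{1,k+2} and K*_{a−1,b−k−2}.) -/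
open Finset

/-!
Take the disjoint union of `K*_{1,k+2}` and `K*_{a-1,b-k-2}`. Two vertices from opposite
colour classes are non-adjacent exactly when they lie in different blocks, and then their
degrees add up to `(k+2) + (a-1)` or to `1 + (b-k-2) ≥ a+k+1`. An oriented cycle stays inside
one block and alternates between the colour classes, so a cycle of length `2a` would need
`a` distinct vertices of `X` in one block, while each block has at most `a-1` of them.
-/

section Paths

variable {V : Type*} {A : V → V → Prop} {s : ℕ} {p : ℕ → V}

theorem IsCycle.isPath (h : IsCycle A s p) : IsPath A s p :=
  ⟨h.1, fun i hi => by simpa [Nat.mod_eq_of_lt hi] using h.2 i (by omega)⟩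

theorem IsPath.forall_of_step (h : IsPath A s p) {P : ℕ → V → Prop} (h0 : P 0 (p 0))
    (hstep : ∀ i u v, A u v → P i u → P (i + 1) v) : ∀ i < s, P i (p i) := by
  intro i
  induction i with
  | zero => exact fun _ => h0
  | succ i ih => exact fun hi => hstep i _ _ (h.2 i hi) (ih (by omega))

theorem IsPath.mem_iff_mem_of_arcs (h : IsPath A s p) {S : Set V}
    (hS : ∀ u v, A u v → (u ∈ S ↔ v ∈ S)) : ∀ i < s, (p i ∈ S ↔ p 0 ∈ S) :=
  h.forall_of_step (P := fun _ v => v ∈ S ↔ p 0 ∈ S) Iff.rfl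
    fun _ u v huv hu => (hS u v huv).symm.trans hu

theorem IsPath.mem_iff_even (h : IsPath A s p) {X : Set V}
    (hX : ∀ u v, A u v → (u ∈ X ↔ v ∉ X)) :
    ∀ i < s, (p i ∈ X ↔ (p 0 ∈ X ↔ Even i)) :=
  h.forall_of_step (P := fun i v => v ∈ X ↔ (p 0 ∈ X ↔ Even i)) (by simp)
    fun i u v huv hu => by have := hX u v huv; rw [Nat.even_add_one]; tauto

/-- The `a` distinct vertices `p (2j + r)`, `j < a`, lie in `X ∩ T` once `r ∈ {0, 1}` is chosen
with `p r ∈ X`. -/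
theorem IsPath.le_card_inter [DecidableEq V] {X T : Finset V} {a : ℕ}
    (h : IsPath A (2 * a) p) (hX : ∀ u v, A u v → (u ∈ X ↔ v ∉ X))
    (hT : ∀ i < 2 * a, p i ∈ T) : a ≤ #(X ∩ T) := by
  set r := if p 0 ∈ X then 0 else 1
  have hr : r ≤ 1 := by unfold r; split_ifs <;> omega
  have hparity : ∀ j, (p 0 ∈ X ↔ Even (2 * j + r)) := fun j => by
    unfold r; split_ifs <;> simp [*]
  have hmaps : Set.MapsTo (fun j => p (2 * j + r)) (range a) ((X ∩ T : Finset V) : Set V) := by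
    intro j hj
    have hj : 2 * j + r < 2 * a := by simp only [coe_range, Set.mem_Iio] at hj; omega
    exact mem_inter.2 ⟨(h.mem_iff_even (X := (X : Set V)) hX _ hj).2 (hparity j), hT _ hj⟩
  have hinj : Set.InjOn (fun j => p (2 * j + r)) (range a) := fun i hi j hj hij => by
    simp only [coe_range, Set.mem_Iio] at hi hj
    have := h.1 (Set.mem_Iio.2 (by omega : 2 * i + r < 2 * a))
      (Set.mem_Iio.2 (by omega : 2 * j + r < 2 * a)) hij
    omega
  simpa using card_le_card_of_injOn _ hmaps hinj

end Paths

section CompleteBipartiteUnion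

variable {V : Type*} [Fintype V] [DecidableEq V] (X S : Finset V)

/-- The disjoint union of the complete bipartite digraphs with colour classes
`X ∩ S`, `Xᶜ ∩ S` and `X ∩ Sᶜ`, `Xᶜ ∩ Sᶜ`. -/
def completeBipartiteUnion : Finset (V × V) :=
  univ.filter fun e => (e.1 ∈ X ↔ e.2 ∉ X) ∧ (e.1 ∈ S ↔ e.2 ∈ S)

variable {X S}

@[simp]
theorem mem_completeBipartiteUnion {u v : V} :
    (u, v) ∈ completeBipartiteUnion X S ↔ (u ∈ X ↔ v ∉ X) ∧ (u ∈ S ↔ v ∈ S) := by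
  simp [completeBipartiteUnion]

theorem isBipartite_completeBipartiteUnion :
    IsBipartite (fun u v => (u, v) ∈ completeBipartiteUnion X S) X Xᶜ := by
  refine ⟨disjoint_compl_right, fun v => by simp [em], fun u v huv => ?_⟩
  simp only [mem_completeBipartiteUnion, mem_compl] at huv ⊢
  tauto

theorem outDeg_completeBipartiteUnion (u : V) :
    outDeg (fun x w => (x, w) ∈ completeBipartiteUnion X S) u =
      #((if u ∈ X then Xᶜ else X) ∩ (if u ∈ S then S else Sᶜ)) := by
  unfold outDeg
  congr 1
  ext w
  by_cases hX : u ∈ X <;> by_cases hS : u ∈ S <;> simp [hX, hS]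

theorem inDeg_completeBipartiteUnion (v : V) :
    inDeg (fun x w => (x, w) ∈ completeBipartiteUnion X S) v =
      #((if v ∈ X then Xᶜ else X) ∩ (if v ∈ S then S else Sᶜ)) := by
  unfold inDeg
  congr 1
  ext w
  by_cases hX : v ∈ X <;> by_cases hS : v ∈ S <;> simp [hX, hS]

theorem min_le_outDeg_add_inDeg_completeBipartiteUnion {u v : V} (huv : u ∈ X ↔ v ∉ X)
    (hnot : (u, v) ∉ completeBipartiteUnion X S) :
    min (#(X ∩ S) + #(Xᶜ ∩ Sᶜ)) (#(Xᶜ ∩ S) + #(X ∩ Sᶜ)) ≤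
      outDeg (fun x w => (x, w) ∈ completeBipartiteUnion X S) u +
        inDeg (fun x w => (x, w) ∈ completeBipartiteUnion X S) v := by
  have hvX : v ∈ X ↔ u ∉ X := by tauto
  have hvS : v ∈ S ↔ u ∉ S := by
    simp only [mem_completeBipartiteUnion, not_and] at hnot; tauto
  rw [outDeg_completeBipartiteUnion, inDeg_completeBipartiteUnion]
  by_cases hu : u ∈ X <;> by_cases hs : u ∈ S <;> simp [hu, hs, hvX, hvS] <;> omega

theorem not_isCycle_completeBipartiteUnion {a : ℕ} (hS : #(X ∩ S) < a) (hSc : #(X ∩ Sᶜ) < a)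
    (p : ℕ → V) : ¬ IsCycle (fun u v => (u, v) ∈ completeBipartiteUnion X S) (2 * a) p := by
  intro hp
  have hpath := hp.isPath
  have hX := hpath.le_card_inter (X := X) (T := if p 0 ∈ S then S else Sᶜ)
    (fun u v huv => (mem_completeBipartiteUnion.1 huv).1) fun i hi => by
      have := hpath.mem_iff_mem_of_arcs (S := (S : Set V))
        (fun u v huv => (mem_completeBipartiteUnion.1 huv).2) i hi
      split_ifs with h0 <;> simp_all
  split_ifs at hX <;> omega

end CompleteBipartiteUnion

theorem card_eq_of_forall_mem_iff_val_mem_Ico {n c m : ℕ} (hn : c + m ≤ n) (s : Finset (Fin n))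
    (hs : ∀ v : Fin n, v ∈ s ↔ c ≤ v.val ∧ v.val < c + m) : #s = m := by
  have : s = (Ico c (c + m)).attachFin fun i hi => (mem_Ico.1 hi).2.trans_le hn := by
    ext v; simp [hs]
  rw [this, card_attachFin, Nat.card_Ico, Nat.add_sub_cancel_left]

theorem stmt_7 (k a b : ℕ) (ha : 2 ≤ a) (hb : a + 2 * k + 2 ≤ b) :
    ∃ (Arcs : Finset (Fin (a + b) × Fin (a + b))) (X Y : Finset (Fin (a + b))),
      X.card = a ∧ Y.card = b ∧
      IsBipartite (fun u v => (u, v) ∈ Arcs) X Y ∧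
      (∀ u v : Fin (a + b), ((u ∈ X ∧ v ∈ Y) ∨ (u ∈ Y ∧ v ∈ X)) →
        (u, v) ∉ Arcs →
        a + k + 1 ≤ outDeg (fun x w => (x, w) ∈ Arcs) u +
          inDeg (fun x w => (x, w) ∈ Arcs) v) ∧
      ¬ ∃ p : ℕ → Fin (a + b), IsCycle (fun u v => (u, v) ∈ Arcs) (2 * a) p := by
  set X : Finset (Fin (a + b)) := univ.filter (·.val < a)
  set S : Finset (Fin (a + b)) :=
    univ.filter fun v => v.val = 0 ∨ (a ≤ v.val ∧ v.val < a + k + 2)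
  have hX : #X = a :=
    card_eq_of_forall_mem_iff_val_mem_Ico (c := 0) (by omega) _ fun v => by simp [X]
  have hXS : #(X ∩ S) = 1 :=
    card_eq_of_forall_mem_iff_val_mem_Ico (c := 0) (by omega) _ fun v => by
      simp only [X, S, mem_inter, mem_filter, mem_univ, true_and]; omega
  have hXSc : #(X ∩ Sᶜ) = a - 1 :=
    card_eq_of_forall_mem_iff_val_mem_Ico (c := 1) (by omega) _ fun v => by
      simp only [X, S, mem_inter, mem_compl, mem_filter, mem_univ, true_and]; omega
  have hXcS : #(Xᶜ ∩ S) = k + 2 :=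
    card_eq_of_forall_mem_iff_val_mem_Ico (c := a) (by omega) _ fun v => by
      simp only [X, S, mem_inter, mem_compl, mem_filter, mem_univ, true_and]; omega
  have hXcSc : #(Xᶜ ∩ Sᶜ) = b - k - 2 :=
    card_eq_of_forall_mem_iff_val_mem_Ico (c := a + k + 2) (by omega) _
      fun v => by
        have := v.isLt
        simp only [X, S, mem_inter, mem_compl, mem_filter, mem_univ, true_and]
        omega
  refine ⟨completeBipartiteUnion X S, X, Xᶜ, hX, by simp [card_compl, hX],
    isBipartite_completeBipartiteUnion, fun u v huv hnot => ?_,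
    fun ⟨p, hp⟩ => not_isCycle_completeBipartiteUnion (a := a) (by omega) (by omega) p hp⟩
  calc a + k + 1 ≤ min (#(X ∩ S) + #(Xᶜ ∩ Sᶜ)) (#(Xᶜ ∩ S) + #(X ∩ Sᶜ)) := by omega
    _ ≤ _ := min_le_outDeg_add_inDeg_completeBipartiteUnion
      (by simp only [mem_compl] at huv; tauto) hnot
end

section
/- Let D be a digraph on n ≥ 3 vertices with minimum out-degree δ^+(D) ≥ n/2 and minimum in-degree δ^-(D) ≥ n/2. Then D contains a Hamiltonian oriented cycle. -/
open Finset

/-!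
Ghouila-Houri's argument. Let `C` be a longest cycle, of length `t < n`, and `q` a longest path
outside `C`, from `u` to `v`, with `s` vertices; so `s + t ≤ n`. By maximality of `q`, all
in-neighbours of `u` and out-neighbours of `v` lie on `C ∪ q`. If `v` had no out-neighbour on
`C`, closing `q` at the first out-neighbour of `v` would give a cycle with more than `n / 2`
vertices inside `q`, which is impossible as `s + t ≤ n`; dually for `u`. By maximality of `C`
there are no arcs `C j → u` and `v → C (j + k)` with `1 ≤ k ≤ min s t`, since `q` would then
replace the `k - 1` vertices strictly between them. Hence the out-neighbour positions `Q` of `v`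
avoid `P + {1, …, min s t}`, where `P` are the in-neighbour positions of `u`; this sumset has at
least `|P| + min s t - 1` elements, and `|P|, |Q| ≥ n / 2 - (s - 1)` then forces `s + t > n`.
-/
section

open scoped Pointwise

theorem ZMod.eq_univ_of_add_one_mem {t : ℕ} [NeZero t] {X : Finset (ZMod t)} (hX : X.Nonempty)
    (h : ∀ x ∈ X, x + 1 ∈ X) : X = univ := by
  obtain ⟨x, hx⟩ := hX
  have hshift : ∀ m : ℕ, x + m ∈ X := by
    intro m
    induction m with
    | zero => simpa using hx
    | succ m ih => simpa [add_assoc] using h _ ih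
  refine eq_univ_of_forall fun y => ?_
  simpa using hshift (y - x).val

theorem ZMod.card_add_Icc {t : ℕ} [NeZero t] {X : Finset (ZMod t)} (hX : X.Nonempty) {m : ℕ}
    (hm : 1 ≤ m) (hne : X + (Icc 1 m).image (Nat.cast : ℕ → ZMod t) ≠ univ) :
    X.card + m - 1 ≤ (X + (Icc 1 m).image (Nat.cast : ℕ → ZMod t)).card := by
  induction m, hm using Nat.le_induction with
  | base => simp [Finset.card_add_singleton]
  | succ m hm ih =>
    set Y := X + (Icc 1 m).image (Nat.cast : ℕ → ZMod t)
    have hYsub : Y ⊆ X + (Icc 1 (m + 1)).image (Nat.cast : ℕ → ZMod t) :=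
      add_subset_add_left (image_subset_image (Icc_subset_Icc_right (by omega)))
    have hshift : ∀ y ∈ Y, y + 1 ∈ X + (Icc 1 (m + 1)).image (Nat.cast : ℕ → ZMod t) := by
      intro y hy
      obtain ⟨x, hx, _, hz, rfl⟩ := Finset.mem_add.1 hy
      obtain ⟨k, hk, rfl⟩ := Finset.mem_image.1 hz
      rw [Finset.mem_Icc] at hk
      exact Finset.mem_add.2 ⟨x, hx, (k + 1 : ℕ), Finset.mem_image.2
        ⟨k + 1, Finset.mem_Icc.2 ⟨by omega, by omega⟩, rfl⟩, by push_cast; ring⟩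
    have hYne : Y ≠ univ := fun h => hne (eq_univ_of_forall fun z => hYsub (h ▸ mem_univ z))
    obtain ⟨y, hy, hy1⟩ : ∃ y ∈ Y, y + 1 ∉ Y := by
      by_contra! hclosed
      exact hYne (ZMod.eq_univ_of_add_one_mem (hX.add (by simp; omega)) hclosed)
    calc X.card + (m + 1) - 1 ≤ (insert (y + 1) Y).card := by
          rw [Finset.card_insert_of_notMem hy1]; have := ih hYne; omega
      _ ≤ _ := Finset.card_le_card (Finset.insert_subset (hshift y hy) hYsub)

theorem ZMod.card_add_card_le_of_disjoint_add_Icc {t m : ℕ} [NeZero t] {P Q : Finset (ZMod t)}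
    (hP : P.Nonempty) (hQ : Q.Nonempty) (hm : 1 ≤ m)
    (hdisj : Disjoint (P + (Icc 1 m).image (Nat.cast : ℕ → ZMod t)) Q) :
    P.card + m - 1 + Q.card ≤ t := by
  obtain ⟨y, hy⟩ := hQ
  have hB := ZMod.card_add_Icc hP hm fun h => disjoint_left.1 hdisj (h ▸ mem_univ y) hy
  have hBQ := card_union_of_disjoint hdisj ▸ card_le_univ (_ ∪ Q)
  rw [ZMod.card] at hBQ
  omega

variable {V : Type*} (R : V → V → Prop)

def IsZModCycle {t : ℕ} (f : ZMod t → V) : Prop :=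
  Function.Injective f ∧ ∀ i, R (f i) (f (i + 1))

variable {R}

namespace IsZModCycle

variable {t : ℕ} {f : ZMod t → V}

theorem ne_zero [Finite V] (hf : IsZModCycle R f) : t ≠ 0 := by
  rintro rfl
  have : Finite ℤ := Finite.of_injective f hf.1
  exact not_finite ℤ

theorem length_le_card [Fintype V] (hf : IsZModCycle R f) : t ≤ Fintype.card V := by
  have : NeZero t := ⟨hf.ne_zero⟩
  simpa using Fintype.card_le_of_injective f hf.1

theorem swap (hf : IsZModCycle R f) : IsZModCycle (fun a b => R b a) (fun i => f (-i)) :=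
  ⟨hf.1.comp neg_injective, fun i => by convert hf.2 (-(i + 1)) using 2; ring⟩

theorem isCycle (hf : IsZModCycle R f) : IsCycle R t (fun i : ℕ => f i) := by
  refine ⟨fun i hi j hj hij => ?_, fun i _ => ?_⟩
  · simpa [ZMod.val_natCast_of_lt hi, ZMod.val_natCast_of_lt hj] using
      congrArg ZMod.val (hf.1 hij)
  · simpa using hf.2 i

theorem nodup_map_range (hf : IsZModCycle R f) (i : ZMod t) {L : ℕ} (hL : L ≤ t) :
    ((List.range L).map fun m : ℕ => f (i + m)).Nodup := by
  refine List.Nodup.map_on (fun m hm m' hm' h => ?_) List.nodup_range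
  rw [List.mem_range] at hm hm'
  have := (ZMod.natCast_eq_natCast_iff' m m' t).1 (add_left_cancel (hf.1 h))
  rwa [Nat.mod_eq_of_lt (by omega), Nat.mod_eq_of_lt (by omega)] at this

theorem isChain_map_range (hf : IsZModCycle R f) (i : ZMod t) (L : ℕ) :
    ((List.range L).map fun m : ℕ => f (i + m)).IsChain R := by
  rw [List.isChain_iff_getElem]
  intro m hm
  simpa [add_assoc] using hf.2 (i + m)

end IsZModCycle

theorem exists_isZModCycle_of_isChain {c : List V} {a b : V} (hnd : c.Nodup) (hch : c.IsChain R)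
    (ha : c.head? = some a) (hb : c.getLast? = some b) (hba : R b a) :
    ∃ f : ZMod c.length → V, IsZModCycle R f := by
  obtain ⟨c', rfl⟩ := List.head?_eq_some_iff.1 ha
  have hlast : (a :: c')[c'.length] = b := by
    rw [List.getLast?_eq_getElem?] at hb
    simpa using hb
  refine ⟨fun i => (a :: c')[i.val]'(by simpa using i.val_lt), fun i j hij => ?_, fun i => ?_⟩
  · exact ZMod.val_injective _ (Fin.val_eq_of_eq (List.nodup_iff_injective_get.1 hnd hij))
  · have hval : (i + 1).val = (i.val + 1) % (c'.length + 1) := by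
      rw [ZMod.val_add, ZMod.val_one_eq_one_mod, Nat.add_mod_mod]; rfl
    have hi : i.val < c'.length + 1 := by simpa using i.val_lt
    rcases Nat.lt_or_ge (i.val + 1) (c'.length + 1) with hlt | hge
    · simp only [hval, Nat.mod_eq_of_lt hlt]
      exact List.isChain_iff_getElem.1 hch i.val (by simpa using hlt)
    · have hi' : i.val = c'.length := by omega
      simp only [hval, hi', Nat.mod_self, hlast]
      simpa using hba

variable (R) in
def IsPathIn (S : Set V) (l : List V) : Prop :=
  l.Nodup ∧ l.IsChain R ∧ ∀ v ∈ l, v ∈ S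

variable (R) in
def IsLongestPathIn (S : Set V) (l : List V) : Prop :=
  IsPathIn R S l ∧ ∀ r, IsPathIn R S r → r.length ≤ l.length

theorem isPathIn_reverse {S : Set V} {l : List V} :
    IsPathIn (fun a b => R b a) S l.reverse ↔ IsPathIn R S l := by
  simp [IsPathIn, List.isChain_reverse]

theorem IsLongestPathIn.reverse {S : Set V} {l : List V} (hl : IsLongestPathIn R S l) :
    IsLongestPathIn (fun a b => R b a) S l.reverse :=
  ⟨isPathIn_reverse.2 hl.1, fun r hr => by
    simpa using hl.2 r.reverse (by simpa using isPathIn_reverse.1 (by simpa using hr))⟩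

variable (R) in
theorem exists_isLongestPathIn [Fintype V] (S : Set V) : ∃ l, IsLongestPathIn R S l := by
  obtain ⟨k, ⟨l, hl, rfl⟩, hmax⟩ :=
    BddAbove.exists_isGreatest_of_nonempty (S := {k | ∃ l, IsPathIn R S l ∧ l.length = k})
      ⟨Fintype.card V, by rintro _ ⟨l, hl, rfl⟩; exact hl.1.length_le_card⟩
      ⟨0, [], by simp [IsPathIn], rfl⟩
  exact ⟨l, hl, fun r hr => hmax ⟨r, hr, rfl⟩⟩

theorem IsLongestPathIn.mem_of_getLast? {S : Set V} {l : List V} (hl : IsLongestPathIn R S l)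
    {v w : V} (hv : l.getLast? = some v) (hvw : R v w) (hw : w ∈ S) : w ∈ l := by
  by_contra hwl
  have hext : IsPathIn R S (l ++ [w]) := by
    refine ⟨List.nodup_append.2 ⟨hl.1.1, List.nodup_singleton w, ?_⟩,
      List.isChain_append.2 ⟨hl.1.2.1, List.isChain_singleton w, ?_⟩, ?_⟩
    · rintro a ha b hb rfl
      simp_all
    · simp_all
    · simpa [or_imp, forall_and] using ⟨hl.1.2.2, hw⟩
  simpa using hl.2 _ hext

theorem IsLongestPathIn.ne_nil {S : Set V} {l : List V} (hl : IsLongestPathIn R S l) {v : V}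
    (hv : v ∈ S) : l ≠ [] := by
  rintro rfl
  simpa using hl.2 [v] (by simp [IsPathIn, hv])

section Degree

variable [DecidableRel R]

theorem outDeg_le_outDegOn_add_outDegOn [Fintype V] {v : V} {S T : Finset V}
    (h : ∀ w, R v w → w ∈ S ∨ w ∈ T) :
    outDeg R v ≤ outDegOn R S v + outDegOn R T v := by
  classical
  calc outDeg R v ≤ ((S ∪ T).filter (R v)).card :=
        Finset.card_le_card fun w hw => by
          simp only [Finset.mem_filter, Finset.mem_union, Finset.mem_univ, true_and] at hw ⊢
          exact ⟨h w hw, hw⟩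
    _ ≤ outDegOn R S v + outDegOn R T v := by
        rw [Finset.filter_union]; exact Finset.card_union_le _ _

theorem outDegOn_lt_card {v : V} {T : Finset V} (hv : v ∈ T) (hirr : ¬ R v v) :
    outDegOn R T v < T.card :=
  Finset.card_lt_card (Finset.filter_ssubset.2 ⟨v, hv, hirr⟩)

end Degree

theorem exists_isZModCycle_of_outNbrs_mem [Fintype V] [DecidableRel R] {l : List V} {v : V}
    (hnd : (l ++ [v]).Nodup) (hch : (l ++ [v]).IsChain R) (hirr : ¬ R v v)
    (hout : ∀ w, R v w → w ∈ l ++ [v]) (hpos : 0 < outDeg R v) :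
    ∃ t, ∃ f : ZMod t → V, IsZModCycle R f ∧ outDeg R v < t ∧ t ≤ l.length + 1 := by
  classical
  replace hout : ∀ w, R v w → w ∈ l := fun w hw =>
    (List.mem_append.1 (hout w hw)).resolve_right fun h => hirr (by simp_all)
  clear hirr
  induction l with
  | nil =>
    have : outDeg R v = 0 := Finset.card_eq_zero.2 (Finset.filter_eq_empty_iff.2 fun w _ hw => by
      simpa using hout w hw)
    omega
  | cons a l ih =>
    by_cases hva : R v a
    · obtain ⟨f, hf⟩ := exists_isZModCycle_of_isChain hnd hch (a := a) (b := v) (by simp)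
        (List.getLast?_eq_some_iff.2 ⟨a :: l, rfl⟩) hva
      have hdeg : outDeg R v ≤ (a :: l).length :=
        (Finset.card_le_card fun w hw => List.mem_toFinset.2 (hout w (by simpa using hw))).trans
          (List.toFinset_card_le _)
      exact ⟨_, f, hf, by simp at hdeg ⊢; omega, by simp⟩
    · obtain ⟨t, f, hf, hlt, hle⟩ := ih (List.nodup_cons.1 hnd).2 hch.tail fun w hw =>
        (List.mem_cons.1 (hout w hw)).resolve_left fun h => hva (h ▸ hw)
      exact ⟨t, f, hf, hlt, by simp; omega⟩

theorem IsZModCycle.exists_insert_path {t : ℕ} {f : ZMod t → V} (hf : IsZModCycle R f)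
    {q : List V} (hnd : q.Nodup) (hch : q.IsChain R) (hdisj : ∀ v ∈ q, v ∉ Set.range f)
    {u w : V} (hu : q.head? = some u) (hw : q.getLast? = some w) {j : ZMod t} {k : ℕ}
    (hk : 1 ≤ k) (hkt : k ≤ t) (hju : R (f j) u) (hwk : R w (f (j + k))) :
    ∃ g : ZMod (t - k + 1 + q.length) → V, IsZModCycle R g := by
  -- `P` runs along the cycle from `f (j + k)` back to `f j`, skipping the `k - 1` vertices between.
  set P := (List.range (t - k + 1)).map fun m : ℕ => f (j + k + m)
  have hPlast : P.getLast? = some (f j) := by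
    have : j + k + ((t - k : ℕ) : ZMod t) = j := by
      rw [Nat.cast_sub hkt, ZMod.natCast_self]; ring
    simp [P, List.getLast?_range, this]
  have hPnd : P.Nodup := hf.nodup_map_range _ (by omega)
  have hPq : (P ++ q).Nodup := List.nodup_append.2 ⟨hPnd, hnd, by
    rintro _ ha b hb rfl
    obtain ⟨m, -, rfl⟩ := List.mem_map.1 ha
    exact hdisj _ hb ⟨_, rfl⟩⟩
  have hch' : (P ++ q).IsChain R := List.isChain_append.2 ⟨hf.isChain_map_range _ _, hch, by
    rw [hPlast, hu]; simpa using hju⟩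
  have hlen : (P ++ q).length = t - k + 1 + q.length := by simp [P]
  rw [← hlen]
  exact exists_isZModCycle_of_isChain hPq hch' (a := f (j + k)) (b := w)
    (by simp [P, List.head?_range]) (by simp [List.getLast?_append, hw]) hwk

theorem IsZModCycle.disjoint_add_Icc [DecidableRel R] {t : ℕ} [NeZero t] {f : ZMod t → V}
    (hf : IsZModCycle R f) (hmax : ∀ t' (g : ZMod t' → V), IsZModCycle R g → t' ≤ t)
    {q : List V} (hnd : q.Nodup) (hch : q.IsChain R) (hdisj : ∀ w ∈ q, w ∉ Set.range f)
    {u v : V} (hu : q.head? = some u) (hv : q.getLast? = some v) :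
    Disjoint (univ.filter (fun j => R (f j) u) + (Icc 1 (min q.length t)).image Nat.cast)
      (univ.filter fun j => R v (f j)) := by
  rw [Finset.disjoint_left]
  rintro _ hB hQ
  obtain ⟨j, hj, _, hz, rfl⟩ := mem_add.1 hB
  obtain ⟨k, hk, rfl⟩ := mem_image.1 hz
  rw [mem_Icc] at hk
  obtain ⟨g, hg⟩ := hf.exists_insert_path hnd hch hdisj hu hv hk.1 (by omega)
    (mem_filter.1 hj).2 (mem_filter.1 hQ).2
  have := hmax _ g hg
  omega

theorem exists_longest_isZModCycle [Fintype V] (h : ∃ t, ∃ f : ZMod t → V, IsZModCycle R f) :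
    ∃ t, ∃ f : ZMod t → V, IsZModCycle R f ∧
      ∀ t' (g : ZMod t' → V), IsZModCycle R g → t' ≤ t := by
  obtain ⟨t, ⟨f, hf⟩, hmax⟩ := BddAbove.exists_isGreatest_of_nonempty
    (S := {t | ∃ f : ZMod t → V, IsZModCycle R f})
    ⟨Fintype.card V, by rintro _ ⟨g, hg⟩; exact hg.length_le_card⟩ h
  exact ⟨t, f, hf, fun t' g hg => hmax ⟨g, hg⟩⟩

section Main

variable [Fintype V] [DecidableRel R]

theorem exists_isZModCycle [Nonempty V] (hirr : ∀ v, ¬ R v v) (hpos : ∀ v, 0 < outDeg R v) :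
    ∃ t, ∃ f : ZMod t → V, IsZModCycle R f := by
  obtain ⟨q, hq⟩ := exists_isLongestPathIn R (Set.univ : Set V)
  obtain ⟨l, v, rfl⟩ : ∃ l v, q = l ++ [v] := by
    simpa using (List.eq_nil_or_concat q).resolve_left
      (hq.ne_nil (Set.mem_univ (Classical.arbitrary V)))
  obtain ⟨t, f, hf, -⟩ := exists_isZModCycle_of_outNbrs_mem hq.1.1 hq.1.2.1 (hirr v)
    (fun w hw => hq.mem_of_getLast? (by simp) hw trivial) (hpos v)
  exact ⟨t, f, hf⟩

omit [DecidableRel R] in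
theorem IsPathIn.length_add_card_le [DecidableEq V] {C : Finset V} {q : List V}
    (hq : IsPathIn R (↑C)ᶜ q) : q.length + C.card ≤ Fintype.card V := by
  rw [← List.toFinset_card_of_nodup hq.1, ← Finset.card_union_of_disjoint
    (Finset.disjoint_left.2 fun w hw => hq.2.2 w (List.mem_toFinset.1 hw))]
  exact Finset.card_le_univ _

theorem outDegOn_pos_and_outDeg_le_of_isLongestPathIn_compl [DecidableEq V]
    (hirr : ∀ v, ¬ R v v) {C : Finset V}
    (hmax : ∀ t (g : ZMod t → V), IsZModCycle R g → t ≤ C.card)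
    {q : List V} (hq : IsLongestPathIn R (↑C)ᶜ q) {v : V} (hv : q.getLast? = some v)
    (hdeg : Fintype.card V ≤ 2 * outDeg R v) :
    0 < outDegOn R C v ∧ outDeg R v ≤ outDegOn R C v + (q.length - 1) := by
  have hvq : v ∈ q.toFinset := List.mem_toFinset.2 (List.mem_of_getLast? hv)
  have hnbr : ∀ w, R v w → w ∈ C ∨ w ∈ q.toFinset := fun w hw =>
    (em (w ∈ C)).imp id fun hwC => List.mem_toFinset.2 (hq.mem_of_getLast? hv hw hwC)
  have hbound := outDeg_le_outDegOn_add_outDegOn hnbr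
  have hqdeg := outDegOn_lt_card hvq (hirr v)
  have hqcard : q.toFinset.card = q.length := List.toFinset_card_of_nodup hq.1.1
  have hlen := hq.1.length_add_card_le
  refine ⟨Nat.pos_of_ne_zero fun h0 => ?_, by omega⟩
  -- Otherwise `q` closes into a cycle with more than `n / 2` vertices, but `|q| + |C| ≤ n`.
  have hoff : ∀ w ∈ C, ¬ R v w := Finset.filter_eq_empty_iff.1 (Finset.card_eq_zero.1 h0)
  obtain ⟨l, rfl⟩ := List.getLast?_eq_some_iff.1 hv
  obtain ⟨t, g, hg, hlt, hle⟩ := exists_isZModCycle_of_outNbrs_mem hq.1.1 hq.1.2.1 (hirr v)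
    (fun w hw => List.mem_toFinset.1 ((hnbr w hw).resolve_left fun hwC => hoff w hwC hw))
    (by omega)
  have := hmax t g hg
  simp only [List.length_append, List.length_singleton] at hlen
  omega

theorem card_le_of_longest_isZModCycle [DecidableEq V] (hirr : ∀ v, ¬ R v v)
    (hdeg : ∀ v, Fintype.card V ≤ 2 * outDeg R v ∧ Fintype.card V ≤ 2 * inDeg R v)
    {t : ℕ} {f : ZMod t → V} (hf : IsZModCycle R f)
    (hmax : ∀ t' (g : ZMod t' → V), IsZModCycle R g → t' ≤ t) : Fintype.card V ≤ t := by
  by_contra! hlt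
  have : NeZero t := ⟨hf.ne_zero⟩
  set C := univ.image f
  have hC : C.card = t := by simp [C, card_image_of_injective _ hf.1]
  obtain ⟨x, -, hx⟩ := exists_mem_notMem_of_card_lt_card (s := C) (t := univ) (by simpa [hC])
  obtain ⟨q, hq⟩ := exists_isLongestPathIn R (↑C)ᶜ
  have hqne := hq.ne_nil hx
  have hqlen : 1 ≤ q.length := List.length_pos_iff.2 hqne
  obtain ⟨u, hu⟩ : ∃ u, q.head? = some u := Option.ne_none_iff_exists'.1 (by simpa using hqne)
  obtain ⟨v, hv⟩ : ∃ v, q.getLast? = some v :=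
    Option.ne_none_iff_exists'.1 (by simpa using hqne)
  -- The in-neighbour side is the out-neighbour side of the reversed digraph and path.
  obtain ⟨hPpos, hPdeg⟩ :
      0 < inDegOn R C u ∧ inDeg R u ≤ inDegOn R C u + (q.reverse.length - 1) :=
    outDegOn_pos_and_outDeg_le_of_isLongestPathIn_compl (R := fun a b => R b a) hirr
      (fun t' _ hg => hC ▸ hmax t' _ hg.swap) hq.reverse (by simpa using hu) (hdeg u).2
  obtain ⟨hQpos, hQdeg⟩ := outDegOn_pos_and_outDeg_le_of_isLongestPathIn_compl hirr
      (fun t' _ hg => hC ▸ hmax t' _ hg) hq hv (hdeg v).1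
  have hPcard : (univ.filter fun j => R (f j) u).card = inDegOn R C u := by
    simp [C, inDegOn, filter_image, card_image_of_injective _ hf.1]
  have hQcard : (univ.filter fun j => R v (f j)).card = outDegOn R C v := by
    simp [C, outDegOn, filter_image, card_image_of_injective _ hf.1]
  have hcount := ZMod.card_add_card_le_of_disjoint_add_Icc (Finset.card_pos.1 (hPcard ▸ hPpos))
    (Finset.card_pos.1 (hQcard ▸ hQpos)) (le_min hqlen (Nat.one_le_iff_ne_zero.2 hf.ne_zero))
    (hf.disjoint_add_Icc hmax hq.1.1 hq.1.2.1
      (fun w hw ⟨i, hi⟩ => hq.1.2.2 w hw (by simp [C, ← hi])) hu hv)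
  have := hq.1.length_add_card_le
  have := hdeg u
  have := hdeg v
  simp only [List.length_reverse] at hPdeg
  omega

end Main

end

theorem stmt_9 {V : Type*} [Fintype V] [DecidableEq V]
    (A : V → V → Prop) [DecidableRel A] (hirr : ∀ v : V, ¬ A v v)
    (hn : 3 ≤ Fintype.card V)
    (hdeg : ∀ v : V, Fintype.card V ≤ 2 * outDeg A v ∧
      Fintype.card V ≤ 2 * inDeg A v) :
    ∃ p : ℕ → V, IsCycle A (Fintype.card V) p ∧
      ∀ v : V, ∃ i < Fintype.card V, p i = v := by
  have : Nonempty V := Fintype.card_pos_iff.1 (by omega)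
  obtain ⟨t, f, hf, hmax⟩ := exists_longest_isZModCycle
    (exists_isZModCycle hirr fun v => by have := (hdeg v).1; omega)
  obtain rfl : t = Fintype.card V :=
    le_antisymm hf.length_le_card (card_le_of_longest_isZModCycle hirr hdeg hf hmax)
  have : NeZero (Fintype.card V) := ⟨hf.ne_zero⟩
  have hbij : Function.Bijective f :=
    (Fintype.bijective_iff_injective_and_card f).2 ⟨hf.1, by simp⟩
  refine ⟨fun i => f i, hf.isCycle, fun v => ?_⟩
  obtain ⟨i, rfl⟩ := hbij.2 v
  exact ⟨i.val, i.val_lt, by simp⟩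
end
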